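/- Let n be a positive integer, U ⊆ ℂⁿ an open set, g : U → Matrix(Fin n, Fin n, ℂ) a smooth map whose value at each point is a Hermitian positive definite matrix, and f : U → ℝ a smooth function. Then the Chern scalar curvatures of g and of the conformal metric e^f·g satisfy, at every point of U: s(e^f g) = e^{−f} · ( s(g) − n · □_g f ), where □_g f = Σ_{i,j} g^{i j̄} ∂_i ∂_{j̄} f. -/

import Mathlib

open scoped ComplexOrder

/-- The Wirtinger derivative `∂_i u = ½(∂u/∂x_i − √−1 ∂u/∂y_i)`, defined via the
real Fréchet derivative. -/
noncomputable def wD (n : ℕ) (i : Fin n) (u : (Fin n → ℂ) → ℂ) (z : Fin n → ℂ) : ℂ :=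
  (1 / 2 : ℂ) *
    (fderiv ℝ u z (Pi.single i 1) - Complex.I * fderiv ℝ u z (Pi.single i Complex.I))

/-- The conjugate Wirtinger derivative `∂_{j̄} u = ½(∂u/∂x_j + √−1 ∂u/∂y_j)`. -/
noncomputable def wDbar (n : ℕ) (j : Fin n) (u : (Fin n → ℂ) → ℂ) (z : Fin n → ℂ) : ℂ :=
  (1 / 2 : ℂ) *
    (fderiv ℝ u z (Pi.single j 1) + Complex.I * fderiv ℝ u z (Pi.single j Complex.I))

/-- The inverse metric entries `g^{i j̄}`, characterized by
`Σ_q g^{i q̄} g_{k q̄} = δ_{ik}` and `Σ_p g^{p j̄} g_{p l̄} = δ_{jl}`;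
they are the entries of the transpose of the matrix inverse. -/
noncomputable def ginv (n : ℕ) (g : (Fin n → ℂ) → Matrix (Fin n) (Fin n) ℂ)
    (i j : Fin n) (z : Fin n → ℂ) : ℂ :=
  (g z)⁻¹ j i

/-- The Chern curvature tensor
`Θ(g)_{i j̄ k l̄} = −∂_i ∂_{j̄} g_{k l̄} + Σ_{p,q} g^{p q̄} (∂_i g_{k q̄}) (∂_{j̄} g_{p l̄})`. -/
noncomputable def chernCurv (n : ℕ) (g : (Fin n → ℂ) → Matrix (Fin n) (Fin n) ℂ)
    (i j k l : Fin n) (z : Fin n → ℂ) : ℂ :=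
  - wD n i (wDbar n j (fun w => g w k l)) z
    + ∑ p : Fin n, ∑ q : Fin n,
        ginv n g p q z * wD n i (fun w => g w k q) z * wDbar n j (fun w => g w p l) z

/-- The Chern scalar curvature `s(g) = Σ g^{i j̄} g^{k l̄} Θ(g)_{i j̄ k l̄}`. -/
noncomputable def chernScalar (n : ℕ) (g : (Fin n → ℂ) → Matrix (Fin n) (Fin n) ℂ)
    (z : Fin n → ℂ) : ℂ :=
  ∑ i : Fin n, ∑ j : Fin n, ∑ k : Fin n, ∑ l : Fin n,
    ginv n g i j z * ginv n g k l z * chernCurv n g i j k l z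

/-- The complex Laplacian `□_g f = Σ_{i,j} g^{i j̄} ∂_i ∂_{j̄} f`. -/
noncomputable def cplxLap (n : ℕ) (g : (Fin n → ℂ) → Matrix (Fin n) (Fin n) ℂ)
    (f : (Fin n → ℂ) → ℝ) (z : Fin n → ℂ) : ℂ :=
  ∑ i : Fin n, ∑ j : Fin n, ginv n g i j z * wD n i (wDbar n j (fun w => (f w : ℂ))) z

section aux
variable {n : ℕ}

lemma wD_congr {i : Fin n} {u v : (Fin n → ℂ) → ℂ} {z : Fin n → ℂ}
    (h : u =ᶠ[nhds z] v) : wD n i u z = wD n i v z := by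
  unfold wD; rw [h.fderiv_eq]

lemma wD_mul {i : Fin n} {a b : (Fin n → ℂ) → ℂ} {z : Fin n → ℂ}
    (ha : DifferentiableAt ℝ a z) (hb : DifferentiableAt ℝ b z) :
    wD n i (fun w => a w * b w) z = wD n i a z * b z + a z * wD n i b z := by
  unfold wD
  rw [fderiv_fun_mul ha hb]
  simp only [ContinuousLinearMap.add_apply, ContinuousLinearMap.smul_apply, smul_eq_mul]
  ring

lemma wD_add {i : Fin n} {a b : (Fin n → ℂ) → ℂ} {z : Fin n → ℂ}
    (ha : DifferentiableAt ℝ a z) (hb : DifferentiableAt ℝ b z) :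
    wD n i (fun w => a w + b w) z = wD n i a z + wD n i b z := by
  unfold wD
  rw [fderiv_fun_add ha hb]
  simp only [ContinuousLinearMap.add_apply]
  ring

lemma wD_exp {i : Fin n} {f : (Fin n → ℂ) → ℝ} {z : Fin n → ℂ}
    (hf : DifferentiableAt ℝ f z) :
    wD n i (fun w => (Real.exp (f w) : ℂ)) z
      = Real.exp (f z) * wD n i (fun w => (f w : ℂ)) z := by
  have hfC : DifferentiableAt ℝ (fun w => ((f w : ℂ))) z :=
    Complex.ofRealCLM.differentiable.differentiableAt.comp z hf
  have h1 : (fun w => (Real.exp (f w) : ℂ)) = fun w => Complex.exp ((f w : ℂ)) := by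
    funext w; rw [Complex.ofReal_exp]
  have h2 : HasFDerivAt (fun w => Complex.exp ((f w : ℂ)))
      (Complex.exp ((f z : ℂ)) • fderiv ℝ (fun w => ((f w : ℂ))) z) z :=
    hfC.hasFDerivAt.cexp
  unfold wD
  rw [h1, h2.fderiv]
  simp only [ContinuousLinearMap.smul_apply, smul_eq_mul, Complex.ofReal_exp]
  ring

lemma wDbar_congr {j : Fin n} {u v : (Fin n → ℂ) → ℂ} {z : Fin n → ℂ}
    (h : u =ᶠ[nhds z] v) : wDbar n j u z = wDbar n j v z := by
  unfold wDbar; rw [h.fderiv_eq]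

lemma wDbar_mul {j : Fin n} {a b : (Fin n → ℂ) → ℂ} {z : Fin n → ℂ}
    (ha : DifferentiableAt ℝ a z) (hb : DifferentiableAt ℝ b z) :
    wDbar n j (fun w => a w * b w) z = wDbar n j a z * b z + a z * wDbar n j b z := by
  unfold wDbar
  rw [fderiv_fun_mul ha hb]
  simp only [ContinuousLinearMap.add_apply, ContinuousLinearMap.smul_apply, smul_eq_mul]
  ring

lemma wDbar_exp {j : Fin n} {f : (Fin n → ℂ) → ℝ} {z : Fin n → ℂ}
    (hf : DifferentiableAt ℝ f z) :
    wDbar n j (fun w => (Real.exp (f w) : ℂ)) z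
      = Real.exp (f z) * wDbar n j (fun w => (f w : ℂ)) z := by
  have hfC : DifferentiableAt ℝ (fun w => ((f w : ℂ))) z :=
    Complex.ofRealCLM.differentiable.differentiableAt.comp z hf
  have h1 : (fun w => (Real.exp (f w) : ℂ)) = fun w => Complex.exp ((f w : ℂ)) := by
    funext w; rw [Complex.ofReal_exp]
  have h2 : HasFDerivAt (fun w => Complex.exp ((f w : ℂ)))
      (Complex.exp ((f z : ℂ)) • fderiv ℝ (fun w => ((f w : ℂ))) z) z :=
    hfC.hasFDerivAt.cexp
  unfold wDbar
  rw [h1, h2.fderiv]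
  simp only [ContinuousLinearMap.smul_apply, smul_eq_mul, Complex.ofReal_exp]
  ring

lemma wDbar_contDiffOn {j : Fin n} {u : (Fin n → ℂ) → ℂ} {U : Set (Fin n → ℂ)}
    (hU : IsOpen U) (hu : ContDiffOn ℝ (⊤ : ℕ∞) u U) :
    ContDiffOn ℝ (⊤ : ℕ∞) (wDbar n j u) U := by
  have hd : ContDiffOn ℝ (⊤ : ℕ∞) (fun z => fderiv ℝ u z) U :=
    hu.fderiv_of_isOpen hU (by simp)
  have h1 : ContDiffOn ℝ (⊤ : ℕ∞) (fun z => fderiv ℝ u z (Pi.single j 1)) U :=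
    hd.clm_apply contDiffOn_const
  have h2 : ContDiffOn ℝ (⊤ : ℕ∞) (fun z => fderiv ℝ u z (Pi.single j Complex.I)) U :=
    hd.clm_apply contDiffOn_const
  unfold wDbar
  exact contDiffOn_const.mul (h1.add (contDiffOn_const.mul h2))

lemma smul_matrix_inv {c : ℂ} (hc : c ≠ 0) {A : Matrix (Fin n) (Fin n) ℂ}
    (hA : IsUnit A.det) : (c • A)⁻¹ = c⁻¹ • A⁻¹ := by
  apply Matrix.inv_eq_right_inv
  rw [Matrix.smul_mul, Matrix.mul_smul, Matrix.mul_nonsing_inv _ hA, smul_smul,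
    mul_inv_cancel₀ hc, one_smul]

lemma sum_helper {m : ℕ} (F G H K : Fin m → Fin m → ℂ) (E A B : ℂ) :
    ∑ p : Fin m, ∑ q : Fin m, E * (A * B * F p q + A * G p q + B * H p q + K p q)
      = E * (A * B * (∑ p : Fin m, ∑ q : Fin m, F p q)
          + A * (∑ p : Fin m, ∑ q : Fin m, G p q)
          + B * (∑ p : Fin m, ∑ q : Fin m, H p q)
          + ∑ p : Fin m, ∑ q : Fin m, K p q) := by
  simp only [Finset.mul_sum, Finset.sum_add_distrib, mul_add]

lemma sum_helper2 {m : ℕ} (A : Fin m → Fin m → Fin m → Fin m → ℂ)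
    (B C : Fin m → Fin m → ℂ) (E : ℂ) :
    ∑ i : Fin m, ∑ j : Fin m, ∑ k : Fin m, ∑ l : Fin m,
        (E * A i j k l - E * (B i j * C k l))
      = E * (∑ i : Fin m, ∑ j : Fin m, ∑ k : Fin m, ∑ l : Fin m, A i j k l)
        - E * ((∑ i : Fin m, ∑ j : Fin m, B i j) * (∑ k : Fin m, ∑ l : Fin m, C k l)) := by
  simp only [Finset.sum_sub_distrib]
  congr 1
  · simp only [Finset.mul_sum]
  · have h2 : ∀ i j, (∑ k : Fin m, ∑ l : Fin m, E * (B i j * C k l))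
        = E * B i j * (∑ k : Fin m, ∑ l : Fin m, C k l) := by
      intro i j
      simp only [Finset.mul_sum, mul_assoc]
    calc (∑ i : Fin m, ∑ j : Fin m, ∑ k : Fin m, ∑ l : Fin m, E * (B i j * C k l))
        = ∑ i : Fin m, ∑ j : Fin m, E * B i j * (∑ k : Fin m, ∑ l : Fin m, C k l) :=
          Finset.sum_congr rfl fun i _ => Finset.sum_congr rfl fun j _ => h2 i j
      _ = E * ((∑ i : Fin m, ∑ j : Fin m, B i j) * (∑ k : Fin m, ∑ l : Fin m, C k l)) := by
          rw [Finset.sum_mul, Finset.mul_sum]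
          refine Finset.sum_congr rfl fun i _ => ?_
          rw [Finset.sum_mul, Finset.mul_sum]
          refine Finset.sum_congr rfl fun j _ => ?_
          ring

end aux

/-- conformal change of the Chern scalar curvature:
`s(e^f g) = e^{−f} (s(g) − n □_g f)` on `U`. -/


theorem stmt8 (n : ℕ) (hn : 0 < n) (U : Set (Fin n → ℂ)) (hU : IsOpen U)
    (g : (Fin n → ℂ) → Matrix (Fin n) (Fin n) ℂ)
    (hg : ∀ k l, ContDiffOn ℝ (⊤ : ℕ∞) (fun z => g z k l) U)
    (hpos : ∀ z ∈ U, (g z).PosDef)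
    (f : (Fin n → ℂ) → ℝ) (hf : ContDiffOn ℝ (⊤ : ℕ∞) f U) :
    ∀ z ∈ U,
      chernScalar n (fun w => (Real.exp (f w) : ℂ) • g w) z
        = Real.exp (-f z) * (chernScalar n g z - n * cplxLap n g f z) := by
  intro z hz
  classical
  have hdet : IsUnit (g z).det := ((hpos z hz).det_pos.ne').isUnit
  have hEz : (Real.exp (f z) : ℂ) ≠ 0 := by
    exact_mod_cast (Real.exp_pos (f z)).ne'
  have hfC : ContDiffOn ℝ (⊤ : ℕ∞) (fun w => ((f w : ℂ))) U :=
    Complex.ofRealCLM.contDiff.comp_contDiffOn hf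
  have hE : ContDiffOn ℝ (⊤ : ℕ∞) (fun w => ((Real.exp (f w)) : ℂ)) U :=
    Complex.ofRealCLM.contDiff.comp_contDiffOn (Real.contDiff_exp.comp_contDiffOn hf)
  have diffAt : ∀ (u : (Fin n → ℂ) → ℂ), ContDiffOn ℝ (⊤ : ℕ∞) u U → ∀ w ∈ U,
      DifferentiableAt ℝ u w := fun u hu w hw =>
    (hu.contDiffAt (hU.mem_nhds hw)).differentiableAt (by simp)
  have hfdiff : ∀ w ∈ U, DifferentiableAt ℝ f w := fun w hw =>
    (hf.contDiffAt (hU.mem_nhds hw)).differentiableAt (by simp)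
  -- first derivatives of the conformal metric entries, valid on U
  have hD : ∀ (i k l : Fin n), ∀ w ∈ U,
      wD n i (fun w => (Real.exp (f w) : ℂ) * g w k l) w
        = (Real.exp (f w) : ℂ) *
            (wD n i (fun w => ((f w : ℂ))) w * g w k l
              + wD n i (fun w => g w k l) w) := by
    intro i k l w hw
    rw [wD_mul (diffAt _ hE w hw) (diffAt _ (hg k l) w hw), wD_exp (hfdiff w hw)]
    ring
  have hDbar : ∀ (j k l : Fin n), ∀ w ∈ U,
      wDbar n j (fun w => (Real.exp (f w) : ℂ) * g w k l) w
        = (Real.exp (f w) : ℂ) *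
            (wDbar n j (fun w => ((f w : ℂ))) w * g w k l
              + wDbar n j (fun w => g w k l) w) := by
    intro j k l w hw
    rw [wDbar_mul (diffAt _ hE w hw) (diffAt _ (hg k l) w hw), wDbar_exp (hfdiff w hw)]
    ring
  -- second derivative at z
  have hDD : ∀ (i j k l : Fin n),
      wD n i (wDbar n j (fun w => (Real.exp (f w) : ℂ) * g w k l)) z
        = (Real.exp (f z) : ℂ) *
            (wD n i (fun w => ((f w : ℂ))) z *
               (wDbar n j (fun w => ((f w : ℂ))) z * g z k l
                 + wDbar n j (fun w => g w k l) z)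
             + (wD n i (wDbar n j (fun w => ((f w : ℂ)))) z * g z k l
                 + wDbar n j (fun w => ((f w : ℂ))) z * wD n i (fun w => g w k l) z
                 + wD n i (wDbar n j (fun w => g w k l)) z)) := by
    intro i j k l
    have hBf := wDbar_contDiffOn (j := j) hU hfC
    have hBg := wDbar_contDiffOn (j := j) hU (hg k l)
    have heq : wDbar n j (fun w => (Real.exp (f w) : ℂ) * g w k l)
        =ᶠ[nhds z] fun w => (Real.exp (f w) : ℂ) *
            (wDbar n j (fun w => ((f w : ℂ))) w * g w k l
              + wDbar n j (fun w => g w k l) w) :=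
      Filter.eventually_of_mem (hU.mem_nhds hz) (fun w hw => hDbar j k l w hw)
    rw [wD_congr heq]
    have d1 : DifferentiableAt ℝ
        (fun w => wDbar n j (fun w => ((f w : ℂ))) w * g w k l) z :=
      (diffAt _ hBf z hz).mul (diffAt _ (hg k l) z hz)
    rw [wD_mul (b := fun w => wDbar n j (fun w => ((f w : ℂ))) w * g w k l
          + wDbar n j (fun w => g w k l) w) (diffAt _ hE z hz) (d1.add (diffAt _ hBg z hz)),
        wD_add d1 (diffAt _ hBg z hz),
        wD_mul (diffAt _ hBf z hz) (diffAt _ (hg k l) z hz),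
        wD_exp (hfdiff z hz)]
    ring
  -- inverse of the conformal metric
  have hginv : ∀ p q : Fin n,
      ginv n (fun w => (Real.exp (f w) : ℂ) • g w) p q z
        = (Real.exp (f z) : ℂ)⁻¹ * ginv n g p q z := by
    intro p q
    unfold ginv
    show ((Real.exp (f z) : ℂ) • g z)⁻¹ q p = _
    rw [smul_matrix_inv hEz hdet]
    simp [Matrix.smul_apply, smul_eq_mul]
  -- delta identities
  have hdelta1 : ∀ p k : Fin n, (∑ q, ginv n g p q z * g z k q)
      = if k = p then 1 else 0 := by
    intro p k
    have h1 : (∑ q, ginv n g p q z * g z k q) = (g z * (g z)⁻¹) k p := by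
      rw [Matrix.mul_apply]
      refine Finset.sum_congr rfl fun q _ => ?_
      unfold ginv; ring
    rw [h1, Matrix.mul_nonsing_inv _ hdet, Matrix.one_apply]
  have hdelta2 : ∀ q l : Fin n, (∑ p, ginv n g p q z * g z p l)
      = if q = l then 1 else 0 := by
    intro q l
    have h1 : (∑ p, ginv n g p q z * g z p l) = ((g z)⁻¹ * g z) q l := by
      rw [Matrix.mul_apply]
      refine Finset.sum_congr rfl fun p _ => ?_
      unfold ginv; ring
    rw [h1, Matrix.nonsing_inv_mul _ hdet, Matrix.one_apply]
  have T2 : ∀ (D : Fin n → ℂ) (k : Fin n),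
      (∑ p, ∑ q, ginv n g p q z * g z k q * D p) = D k := by
    intro D k
    have h1 : ∀ p, (∑ q, ginv n g p q z * g z k q * D p)
        = (if k = p then 1 else 0) * D p := by
      intro p; rw [← Finset.sum_mul, hdelta1]
    simp only [h1, ite_mul, one_mul, zero_mul]
    simp
  have T3 : ∀ (D : Fin n → ℂ) (l : Fin n),
      (∑ p, ∑ q, ginv n g p q z * D q * g z p l) = D l := by
    intro D l
    rw [Finset.sum_comm]
    have h1 : ∀ q, (∑ p, ginv n g p q z * D q * g z p l)
        = (if q = l then 1 else 0) * D q := by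
      intro q
      have h2 : ∀ p, ginv n g p q z * D q * g z p l
          = (ginv n g p q z * g z p l) * D q := by
        intro p; ring
      simp only [h2]
      rw [← Finset.sum_mul, hdelta2]
    simp only [h1, ite_mul, one_mul, zero_mul]
    simp
  have htr : (∑ k, ∑ l, ginv n g k l z * g z k l) = (n : ℂ) := by
    have h1 : ∀ k, (∑ l, ginv n g k l z * g z k l) = 1 := by
      intro k; rw [hdelta1 k k]; simp
    simp [h1]
  -- curvature of the conformal metric
  have hcurv : ∀ i j k l : Fin n,
      chernCurv n (fun w => (Real.exp (f w) : ℂ) • g w) i j k l z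
        = (Real.exp (f z) : ℂ) *
            (chernCurv n g i j k l z
              - wD n i (wDbar n j (fun w => ((f w : ℂ)))) z * g z k l) := by
    intro i j k l
    have hterm : ∀ p q : Fin n,
        ginv n (fun w => (Real.exp (f w) : ℂ) • g w) p q z
            * wD n i (fun w => (Real.exp (f w) : ℂ) * g w k q) z
            * wDbar n j (fun w => (Real.exp (f w) : ℂ) * g w p l) z
        = (Real.exp (f z) : ℂ) *
            (wD n i (fun w => ((f w : ℂ))) z * wDbar n j (fun w => ((f w : ℂ))) z
                * (ginv n g p q z * g z k q * g z p l)
              + wD n i (fun w => ((f w : ℂ))) z *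
                  (ginv n g p q z * g z k q * wDbar n j (fun w => g w p l) z)
              + wDbar n j (fun w => ((f w : ℂ))) z *
                  (ginv n g p q z * wD n i (fun w => g w k q) z * g z p l)
              + ginv n g p q z * wD n i (fun w => g w k q) z
                  * wDbar n j (fun w => g w p l) z) := by
      intro p q
      rw [hginv p q, hD i k q z hz, hDbar j p l z hz]
      field_simp
      ring
    have hsum : (∑ p, ∑ q, ginv n (fun w => (Real.exp (f w) : ℂ) • g w) p q z
            * wD n i (fun w => (Real.exp (f w) : ℂ) * g w k q) z
            * wDbar n j (fun w => (Real.exp (f w) : ℂ) * g w p l) z)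
        = (Real.exp (f z) : ℂ) *
            (wD n i (fun w => ((f w : ℂ))) z * wDbar n j (fun w => ((f w : ℂ))) z
                * g z k l
              + wD n i (fun w => ((f w : ℂ))) z * wDbar n j (fun w => g w k l) z
              + wDbar n j (fun w => ((f w : ℂ))) z * wD n i (fun w => g w k l) z
              + ∑ p, ∑ q, ginv n g p q z * wD n i (fun w => g w k q) z
                  * wDbar n j (fun w => g w p l) z) := by
      rw [Finset.sum_congr rfl fun p _ => Finset.sum_congr rfl fun q _ => hterm p q]
      rw [sum_helper]
      have e1 : (∑ p, ∑ q, ginv n g p q z * g z k q * g z p l) = g z k l :=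
        T2 (fun p => g z p l) k
      have e2 : (∑ p, ∑ q, ginv n g p q z * g z k q
          * wDbar n j (fun w => g w p l) z)
          = wDbar n j (fun w => g w k l) z :=
        T2 (fun p => wDbar n j (fun w => g w p l) z) k
      have e3 : (∑ p, ∑ q, ginv n g p q z * wD n i (fun w => g w k q) z
          * g z p l) = wD n i (fun w => g w k l) z :=
        T3 (fun q => wD n i (fun w => g w k q) z) l
      rw [e1, e2, e3]
    unfold chernCurv
    simp only [Matrix.smul_apply, smul_eq_mul]
    rw [hDD i j k l, hsum]
    ring
  -- assemble
  unfold chernScalar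
  have hstep : ∀ i j k l : Fin n,
      ginv n (fun w => (Real.exp (f w) : ℂ) • g w) i j z
          * ginv n (fun w => (Real.exp (f w) : ℂ) • g w) k l z
          * chernCurv n (fun w => (Real.exp (f w) : ℂ) • g w) i j k l z
        = (Real.exp (f z) : ℂ)⁻¹ *
            (ginv n g i j z * ginv n g k l z * chernCurv n g i j k l z)
          - (Real.exp (f z) : ℂ)⁻¹ *
            ((ginv n g i j z * wD n i (wDbar n j (fun w => ((f w : ℂ)))) z)
              * (ginv n g k l z * g z k l)) := by
    intro i j k l
    rw [hginv, hginv, hcurv]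
    field_simp
  rw [Finset.sum_congr rfl fun i _ => Finset.sum_congr rfl fun j _ =>
      Finset.sum_congr rfl fun k _ => Finset.sum_congr rfl fun l _ => hstep i j k l]
  have hsplit : (∑ i : Fin n, ∑ j : Fin n, ∑ k : Fin n, ∑ l : Fin n,
        ((Real.exp (f z) : ℂ)⁻¹ *
            (ginv n g i j z * ginv n g k l z * chernCurv n g i j k l z)
          - (Real.exp (f z) : ℂ)⁻¹ *
            ((ginv n g i j z * wD n i (wDbar n j (fun w => ((f w : ℂ)))) z)
              * (ginv n g k l z * g z k l))))
      = (Real.exp (f z) : ℂ)⁻¹ * (∑ i : Fin n, ∑ j : Fin n, ∑ k : Fin n, ∑ l : Fin n,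
            ginv n g i j z * ginv n g k l z * chernCurv n g i j k l z)
        - (Real.exp (f z) : ℂ)⁻¹ *
          ((∑ i : Fin n, ∑ j : Fin n,
              ginv n g i j z * wD n i (wDbar n j (fun w => ((f w : ℂ)))) z)
            * (∑ k : Fin n, ∑ l : Fin n, ginv n g k l z * g z k l)) :=
    sum_helper2 (fun i j k l => ginv n g i j z * ginv n g k l z
        * chernCurv n g i j k l z)
      (fun i j => ginv n g i j z * wD n i (wDbar n j (fun w => ((f w : ℂ)))) z)
      (fun k l => ginv n g k l z * g z k l) _
  rw [hsplit, htr]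
  unfold cplxLap
  rw [Real.exp_neg, Complex.ofReal_inv]
  ring
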